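/- arXiv:2406.06342 — 5 statements merged into one kernel-verified Lean document; each statement's English description precedes it below -/
import Mathlib

section
/- Let H and K be real Hilbert spaces, let A : H → K be a bounded linear operator satisfying A A* = α Id_K for some α > 0, and let f : K → ℝ ∪ {∞} be proper, closed and convex. Then f ∘ A is proper, closed and convex on H, and for every x ∈ H one has prox_{f∘A}(x) = x + (1/α) A*( prox_{αf}(A x) − A x ). -/
noncomputable section

/-- Convexity for extended-real-valued functions. -/
def ConvexFnE {H : Type*} [AddCommGroup H] [Module ℝ H] (f : H → EReal) : Prop :=
  ∀ x y : H, ∀ a b : ℝ, 0 ≤ a → 0 ≤ b → a + b = 1 →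
    f (a • x + b • y) ≤ (a : EReal) * f x + (b : EReal) * f y

/-- `p` is the unique minimiser of `y ↦ f y + (1/(2τ))‖y − z‖²`, i.e. `p = prox_{τ f}(z)`. -/
def IsProxPt {H : Type*} [NormedAddCommGroup H] (f : H → EReal) (τ : ℝ) (z p : H) : Prop :=
  (∀ y : H, f p + ((1 / (2 * τ) * ‖p - z‖ ^ 2 : ℝ) : EReal)
      ≤ f y + ((1 / (2 * τ) * ‖y - z‖ ^ 2 : ℝ) : EReal)) ∧
  ∀ q : H, (∀ y : H, f q + ((1 / (2 * τ) * ‖q - z‖ ^ 2 : ℝ) : EReal)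
      ≤ f y + ((1 / (2 * τ) * ‖y - z‖ ^ 2 : ℝ) : EReal)) → q = p

/-! Write `A†` for the adjoint. Since `A A† = α`, the operator `P = α⁻¹ A† A` is the
orthogonal projection onto the range of `A†`, whence `α ‖v‖² = ‖A v‖² + α ‖v - P v‖²`.
So the objective `f (A u) + ½ ‖u - x‖²` of `prox_{f∘A}(x)` dominates
`f (A u) + (2α)⁻¹ ‖A u - A x‖²`, the objective of `prox_{α f}(A x)` at `A u`, with equality
exactly when `u - x` lies in the range of `A†`. For `q = prox_{α f}(A x)`, the point
`x + α⁻¹ A† (q - A x)` is the only `u` with `A u = q` where equality holds, so it is the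
unique minimiser of the first objective. -/

open ContinuousLinearMap

theorem ConvexFnE.comp_linearMap {E F : Type*} [AddCommGroup E] [Module ℝ E] [AddCommGroup F]
    [Module ℝ F] {f : F → EReal} (hf : ConvexFnE f) (g : E →ₗ[ℝ] F) :
    ConvexFnE (fun x => f (g x)) := by
  intro x y a b ha hb hab
  simpa only [map_add, map_smul] using hf (g x) (g y) a b ha hb hab

def IsUniqueMinimizer {X : Type*} (Φ : X → EReal) (p : X) : Prop :=
  (∀ y, Φ p ≤ Φ y) ∧ ∀ q, (∀ y, Φ q ≤ Φ y) → q = p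

theorem IsUniqueMinimizer.of_le_comp {X Y : Type*} {Φ : X → EReal} {Ψ : Y → EReal} {q : Y}
    {p : X} (π : X → Y) (hq : IsUniqueMinimizer Ψ q) (hle : ∀ u, Ψ (π u) ≤ Φ u)
    (hp : Φ p ≤ Ψ q) (heq : ∀ u, π u = q → Φ u ≤ Ψ q → u = p) :
    IsUniqueMinimizer Φ p := by
  refine ⟨fun u => hp.trans ((hq.1 (π u)).trans (hle u)), fun u hu => ?_⟩
  have hπu : π u = q :=
    hq.2 (π u) fun y => (hle u).trans ((hu p).trans (hp.trans (hq.1 y)))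
  exact heq u hπu ((hu p).trans hp)

theorem isProxPt_iff {H : Type*} [NormedAddCommGroup H] {f : H → EReal} {τ : ℝ} {z p : H} :
    IsProxPt f τ z p ↔
      IsUniqueMinimizer (fun y => f y + ((1 / (2 * τ) * ‖y - z‖ ^ 2 : ℝ) : EReal)) p :=
  Iff.rfl

theorem IsProxPt.apply_ne_top {H : Type*} [NormedAddCommGroup H] {f : H → EReal} {τ : ℝ}
    {z p : H} (hp : IsProxPt f τ z p) (hproper : ∃ y, f y ≠ ⊤) : f p ≠ ⊤ := by
  obtain ⟨y, hy⟩ := hproper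
  intro htop
  have h := hp.1 y
  rw [htop, EReal.top_add_coe, top_le_iff] at h
  exact EReal.add_ne_top hy (EReal.coe_ne_top _) h

section CompAdjointEqSMul

variable {H K : Type*} [NormedAddCommGroup H] [InnerProductSpace ℝ H] [CompleteSpace H]
  [NormedAddCommGroup K] [InnerProductSpace ℝ K] [CompleteSpace K] {A : H →L[ℝ] K} {α : ℝ}

theorem apply_adjoint_apply_of_comp_adjoint_eq 
    (hAA : A ∘L adjoint A = α • ContinuousLinearMap.id ℝ K) (w : K) :
    A (adjoint A w) = α • w := by
  simpa using DFunLike.congr_fun hAA w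

theorem surjective_of_comp_adjoint_eq (hα : α ≠ 0)
    (hAA : A ∘L adjoint A = α • ContinuousLinearMap.id ℝ K) :
    Function.Surjective A := fun w =>
  ⟨α⁻¹ • adjoint A w, by
    rw [map_smul, apply_adjoint_apply_of_comp_adjoint_eq hAA, inv_smul_smul₀ hα]⟩

theorem norm_adjoint_apply_sq_of_comp_adjoint_eq 
    (hAA : A ∘L adjoint A = α • ContinuousLinearMap.id ℝ K) (w : K) :
    ‖adjoint A w‖ ^ 2 = α * ‖w‖ ^ 2 := by
  rw [← real_inner_self_eq_norm_sq, adjoint_inner_left,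
    apply_adjoint_apply_of_comp_adjoint_eq hAA, real_inner_smul_right, real_inner_self_eq_norm_sq]

theorem norm_sub_smul_adjoint_apply_sq_of_comp_adjoint_eq (hα : α ≠ 0)
    (hAA : A ∘L adjoint A = α • ContinuousLinearMap.id ℝ K) (v : H) :
    ‖v - α⁻¹ • adjoint A (A v)‖ ^ 2 = ‖v‖ ^ 2 - α⁻¹ * ‖A v‖ ^ 2 := by
  have hinner : inner ℝ v (α⁻¹ • adjoint A (A v)) = α⁻¹ * ‖A v‖ ^ 2 := by
    rw [real_inner_smul_right, real_inner_comm, adjoint_inner_left, real_inner_self_eq_norm_sq]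
  have hnorm : ‖α⁻¹ • adjoint A (A v)‖ ^ 2 = α⁻¹ * ‖A v‖ ^ 2 := by
    rw [norm_smul, mul_pow, norm_adjoint_apply_sq_of_comp_adjoint_eq hAA, Real.norm_eq_abs, sq_abs]
    field_simp
  rw [norm_sub_sq_real, hinner, hnorm]
  ring

theorem norm_apply_sq_le_of_comp_adjoint_eq (hα : 0 < α)
    (hAA : A ∘L adjoint A = α • ContinuousLinearMap.id ℝ K) (v : H) :
    ‖A v‖ ^ 2 ≤ α * ‖v‖ ^ 2 := by
  have h := norm_sub_smul_adjoint_apply_sq_of_comp_adjoint_eq hα.ne' hAA v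
  have h0 : 0 ≤ ‖v‖ ^ 2 - α⁻¹ * ‖A v‖ ^ 2 := h ▸ sq_nonneg _
  rwa [sub_nonneg, inv_mul_le_iff₀ hα] at h0

theorem eq_smul_adjoint_apply_of_norm_sq_le (hα : 0 < α)
    (hAA : A ∘L adjoint A = α • ContinuousLinearMap.id ℝ K)
    {v : H} (hv : α * ‖v‖ ^ 2 ≤ ‖A v‖ ^ 2) : v = α⁻¹ • adjoint A (A v) := by
  have h := norm_sub_smul_adjoint_apply_sq_of_comp_adjoint_eq hα.ne' hAA v
  rw [← le_inv_mul_iff₀ hα, ← sub_nonpos, ← h] at hv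
  rw [← sub_eq_zero, ← norm_eq_zero]
  exact (pow_eq_zero_iff two_ne_zero).mp (le_antisymm hv (sq_nonneg _))

theorem isProxPt_comp_of_comp_adjoint_eq (hα : 0 < α)
    (hAA : A ∘L adjoint A = α • ContinuousLinearMap.id ℝ K)
    {f : K → EReal} (hbot : ∀ y, f y ≠ ⊥) (hproper : ∃ y, f y ≠ ⊤) {x : H} {q : K}
    (hq : IsProxPt f α (A x) q) :
    IsProxPt (fun u => f (A u)) 1 x (x + α⁻¹ • adjoint A (q - A x)) := by
  have hAp : A (x + α⁻¹ • adjoint A (q - A x)) = q := by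
    rw [map_add, map_smul, apply_adjoint_apply_of_comp_adjoint_eq hAA, inv_smul_smul₀ hα.ne',
      add_sub_cancel]
  have hdist (u : H) : 1 / (2 * α) * ‖A u - A x‖ ^ 2 ≤ 1 / (2 * 1) * ‖u - x‖ ^ 2 := by
    rw [← map_sub, mul_one, div_mul_eq_mul_div, div_mul_eq_mul_div,
      div_le_div_iff₀ (by positivity) two_pos]
    nlinarith [norm_apply_sq_le_of_comp_adjoint_eq hα hAA (u - x)]
  refine isProxPt_iff.mpr
    ((isProxPt_iff.mp hq).of_le_comp A (fun u => ?_) ?_ (fun u hAu hu => ?_))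
  · exact add_le_add le_rfl (EReal.coe_le_coe_iff.mpr (hdist u))
  · rw [hAp, add_sub_cancel_left, norm_smul, mul_pow,
      norm_adjoint_apply_sq_of_comp_adjoint_eq hAA, Real.norm_eq_abs, sq_abs]
    refine le_of_eq (congrArg (fun t : ℝ => f q + (t : EReal)) ?_)
    field_simp
  · obtain ⟨r, hr⟩ : ∃ r : ℝ, f q = r :=
      ⟨_, (EReal.coe_toReal (hq.apply_ne_top hproper) (hbot q)).symm⟩
    rw [hAu, hr, ← EReal.coe_add, ← EReal.coe_add, EReal.coe_le_coe_iff, add_le_add_iff_left,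
      ← hAu, ← map_sub, div_mul_eq_mul_div, div_mul_eq_mul_div,
      div_le_div_iff₀ (by positivity) (by positivity)] at hu
    have hres := eq_smul_adjoint_apply_of_norm_sq_le hα hAA (v := u - x) (by linarith)
    rw [← hAu, ← map_sub, ← hres, add_sub_cancel]

end CompAdjointEqSMul

/-- If `A : H → K` is a bounded linear operator between real Hilbert spaces with `A A* = α Id`
for some `α > 0`, and `f : K → ℝ ∪ {∞}` is proper, closed and convex, then `f ∘ A` is proper,
closed and convex, and `prox_{f∘A}(x) = x + (1/α) A*(prox_{αf}(Ax) − Ax)` for every `x`. -/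
theorem prox_comp_with_orthogonal_rows
    {H K : Type*} [NormedAddCommGroup H] [InnerProductSpace ℝ H] [CompleteSpace H]
    [NormedAddCommGroup K] [InnerProductSpace ℝ K] [CompleteSpace K]
    (A : H →L[ℝ] K) (α : ℝ) (hα : 0 < α)
    (hAA : A ∘L ContinuousLinearMap.adjoint A = α • ContinuousLinearMap.id ℝ K)
    (f : K → EReal) (hbot : ∀ y, f y ≠ ⊥) (hproper : ∃ y, f y ≠ ⊤)
    (hclosed : LowerSemicontinuous f) (hconv : ConvexFnE f) :
    ((∀ x : H, f (A x) ≠ ⊥) ∧ (∃ x : H, f (A x) ≠ ⊤) ∧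
      LowerSemicontinuous (fun x : H => f (A x)) ∧ ConvexFnE (fun x : H => f (A x))) ∧
    ∀ (x : H) (q : K), IsProxPt f α (A x) q →
      IsProxPt (fun u : H => f (A u)) 1 x
        (x + α⁻¹ • ContinuousLinearMap.adjoint A (q - A x)) := by
  refine ⟨⟨fun x => hbot (A x), ?_, hclosed.comp A.continuous,
      hconv.comp_linearMap A.toLinearMap⟩,
    fun x q hq => isProxPt_comp_of_comp_adjoint_eq hα hAA hbot hproper hq⟩
  obtain ⟨y, hy⟩ := hproper
  obtain ⟨x, rfl⟩ := surjective_of_comp_adjoint_eq hα.ne' hAA y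
  exact ⟨x, hy⟩
end
end

section
/- Let H be a real Hilbert space, g : H → ℝ ∪ {∞} proper, closed and convex with a minimiser x* ∈ H, and let τ > 0. Define the proximal point iterates x_{k+1} = prox_{τg}(x_k) from any x_0 ∈ H. Then for every k ≥ 1, g(x_k) − g(x*) ≤ ‖x_0 − x*‖² / (2τk); i.e. the proximal point algorithm with constant step size converges at rate O(1/k) in objective value. -/
/-
Convexity of `g` and the quadratic prox penalty give the three-point inequality
`g(x_{k+1}) + ‖y − x_{k+1}‖²/(2τ) ≤ g(y) + ‖y − x_k‖²/(2τ)` for every `y` in the domain.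
Taking `y = x_k` shows that `g(x_k)` is nonincreasing for `k ≥ 1`; taking `y = x*`, summing
telescopes to `∑_{j=1}^k (g(x_j) − g(x*)) ≤ ‖x_0 − x*‖²/(2τ)`, and by monotonicity the sum is at
least `k (g(x_k) − g(x*))`.
-/

noncomputable section

open Set Filter Topology

theorem le_of_forall_mem_Ioo_le_add_mul {a b e : ℝ} (h : ∀ t ∈ Ioo (0 : ℝ) 1, a ≤ b + t * e) :
    a ≤ b := by
  have hlim : Tendsto (fun t : ℝ => b + t * e) (𝓝[>] 0) (𝓝 b) := by
    have : Continuous fun t : ℝ => b + t * e := by fun_prop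
    simpa using (this.tendsto 0).mono_left nhdsWithin_le_nhds
  exact ge_of_tendsto hlim (eventually_of_mem (Ioo_mem_nhdsGT one_pos) h)

theorem Antitone.succ_mul_le_of_le_sub_succ {u e : ℕ → ℝ} (hu : Antitone u)
    (he : ∀ n, 0 ≤ e n) (h : ∀ n, u n ≤ e n - e (n + 1)) (n : ℕ) :
    (n + 1) * u n ≤ e 0 := by
  calc (n + 1) * u n = ∑ _i ∈ Finset.range (n + 1), u n := by simp
    _ ≤ ∑ i ∈ Finset.range (n + 1), u i :=
        Finset.sum_le_sum fun i hi => hu (Nat.lt_succ_iff.mp (Finset.mem_range.mp hi))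
    _ ≤ ∑ i ∈ Finset.range (n + 1), (e i - e (i + 1)) := Finset.sum_le_sum fun i _ => h i
    _ = e 0 - e (n + 1) := Finset.sum_range_sub' e (n + 1)
    _ ≤ e 0 := sub_le_self _ (he _)

section ThreePoint

variable {H : Type*} [NormedAddCommGroup H] [InnerProductSpace ℝ H]

theorem ConvexOn.three_point_of_isMinOn {s : Set H} {f : H → ℝ} (hf : ConvexOn ℝ s f)
    {c : ℝ} {z p y : H} (hmin : IsMinOn (fun y => f y + c * ‖y - z‖ ^ 2) s p)
    (hp : p ∈ s) (hy : y ∈ s) :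
    f p + c * ‖p - z‖ ^ 2 + c * ‖y - p‖ ^ 2 ≤ f y + c * ‖y - z‖ ^ 2 := by
  set i := inner ℝ (p - z) (y - p)
  -- compare `p` with the points `(1 - t) p + t y` of the segment and let `t → 0`
  have along_segment : ∀ t ∈ Ioo (0 : ℝ) 1,
      f p ≤ f y + 2 * c * i + t * (c * ‖y - p‖ ^ 2) := by
    rintro t ⟨ht0, ht1⟩
    have hmem : (1 - t) • p + t • y ∈ s := hf.1 hp hy (by linarith) ht0.le (by ring)
    have hconv : f ((1 - t) • p + t • y) ≤ (1 - t) * f p + t * f y :=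
      hf.2 hp hy (by linarith) ht0.le (by ring)
    have hnorm : ‖(1 - t) • p + t • y - z‖ ^ 2 = ‖p - z‖ ^ 2 + 2 * t * i + t ^ 2 * ‖y - p‖ ^ 2 := by
      rw [show (1 - t) • p + t • y - z = (p - z) + t • (y - p) by module, norm_add_sq_real,
        real_inner_smul_right, norm_smul, Real.norm_of_nonneg ht0.le]
      ring
    have hle := isMinOn_iff.mp hmin _ hmem
    simp only [hnorm] at hle
    refine le_of_mul_le_mul_left ?_ ht0
    nlinarith
  have hsplit : ‖y - z‖ ^ 2 = ‖p - z‖ ^ 2 + 2 * i + ‖y - p‖ ^ 2 := by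
    rw [show y - z = (p - z) + (y - p) by abel, norm_add_sq_real]
  have := le_of_forall_mem_Ioo_le_add_mul along_segment
  rw [hsplit]
  linarith

end ThreePoint

section ExtendedReal

variable {H : Type*}

theorem ConvexFnE.convexOn_toReal [AddCommGroup H] [Module ℝ H] {g : H → EReal}
    (hbot : ∀ x, g x ≠ ⊥) (hg : ConvexFnE g) :
    ConvexOn ℝ {x | g x ≠ ⊤} fun x => (g x).toReal := by
  have hle : ∀ ⦃x y⦄, g x ≠ ⊤ → g y ≠ ⊤ → ∀ ⦃a b : ℝ⦄, 0 ≤ a → 0 ≤ b → a + b = 1 →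
      g (a • x + b • y) ≤ ((a * (g x).toReal + b * (g y).toReal : ℝ) : EReal) := by
    intro x y hx hy a b ha hb hab
    simpa [EReal.coe_toReal hx (hbot x), EReal.coe_toReal hy (hbot y)] using
      hg x y a b ha hb hab
  refine ⟨fun x hx y hy a b ha hb hab => ?_, fun x hx y hy a b ha hb hab => ?_⟩
  · exact ne_top_of_le_ne_top (EReal.coe_ne_top _) (hle hx hy ha hb hab)
  · have := EReal.toReal_le_toReal (hle hx hy ha hb hab) (hbot _) (EReal.coe_ne_top _)
    rwa [EReal.toReal_coe] at this

variable [NormedAddCommGroup H] {g : H → EReal} {τ : ℝ} {z p : H}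

theorem IsProxPt.ne_top (h : IsProxPt g τ z p) {y : H} (hy : g y ≠ ⊤) : g p ≠ ⊤ := by
  intro hp
  have := h.1 y
  rw [hp, EReal.top_add_coe, top_le_iff] at this
  exact EReal.add_ne_top hy (EReal.coe_ne_top _) this

theorem IsProxPt.isMinOn_toReal (hbot : ∀ x, g x ≠ ⊥) (h : IsProxPt g τ z p) (hp : g p ≠ ⊤) :
    IsMinOn (fun y => (g y).toReal + 1 / (2 * τ) * ‖y - z‖ ^ 2) {y | g y ≠ ⊤} p := by
  intro y (hy : g y ≠ ⊤)
  have := h.1 y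
  rw [← EReal.coe_toReal hp (hbot p), ← EReal.coe_toReal hy (hbot y)] at this
  exact_mod_cast this

end ExtendedReal

theorem proximal_point_rate_general
    {H : Type*} [NormedAddCommGroup H] [InnerProductSpace ℝ H]
    (g : H → EReal) (hbot : ∀ x, g x ≠ ⊥) (hproper : ∃ x, g x ≠ ⊤)
    (hconv : ConvexFnE g)
    (xs : H) (hmin : ∀ y : H, g xs ≤ g y)
    (τ : ℝ) (hτ : 0 < τ)
    (x : ℕ → H) (hrec : ∀ k : ℕ, IsProxPt g τ (x k) (x (k + 1))) :
    ∀ k : ℕ, 1 ≤ k →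
      g (x k) ≤ g xs + ((‖x 0 - xs‖ ^ 2 / (2 * τ * k) : ℝ) : EReal) := by
  obtain ⟨w, hw⟩ := hproper
  set f : H → ℝ := fun y => (g y).toReal
  set c : ℝ := 1 / (2 * τ)
  have hxs : g xs ≠ ⊤ := ne_top_of_le_ne_top hw (hmin w)
  have hx : ∀ j, g (x (j + 1)) ≠ ⊤ := fun j => (hrec j).ne_top hw
  have three_point : ∀ j {y}, g y ≠ ⊤ → f (x (j + 1)) + c * ‖x (j + 1) - x j‖ ^ 2
      + c * ‖y - x (j + 1)‖ ^ 2 ≤ f y + c * ‖y - x j‖ ^ 2 := fun j y hy =>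
    (hconv.convexOn_toReal hbot).three_point_of_isMinOn
      ((hrec j).isMinOn_toReal hbot (hx j)) (hx j) hy
  have descent : Antitone fun j => f (x (j + 1)) - f xs := by
    refine antitone_nat_of_succ_le fun j => ?_
    have := three_point (j + 1) (hx j)
    simp only [sub_self, norm_zero] at this
    nlinarith [sq_nonneg ‖x (j + 2) - x (j + 1)‖, show 0 < c by positivity]
  have telescoping : ∀ j, f (x (j + 1)) - f xs ≤ c * ‖xs - x j‖ ^ 2 - c * ‖xs - x (j + 1)‖ ^ 2 :=
    fun j => by nlinarith [three_point j hxs, sq_nonneg ‖x (j + 1) - x j‖, show 0 < c by positivity]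
  rintro (_ | m) hk
  · omega
  have hrate := descent.succ_mul_le_of_le_sub_succ (fun j => by positivity) telescoping m
  have hbound : f (x (m + 1)) ≤ f xs + ‖x 0 - xs‖ ^ 2 / (2 * τ * ↑(m + 1)) := by
    rw [norm_sub_rev] at hrate
    push_cast
    rw [← sub_le_iff_le_add', le_div_iff₀ (by positivity)]
    simp only [c] at hrate
    field_simp at hrate
    linarith
  rw [← EReal.coe_toReal (hx m) (hbot _), ← EReal.coe_toReal hxs (hbot _)]
  exact_mod_cast hbound

/-- `O(1/k)` convergence of the proximal point algorithm: for a proper, closed, convex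
`g : H → ℝ ∪ {∞}` with minimiser `x*`, constant step `τ > 0`, and iterates
`x_{k+1} = prox_{τg}(x_k)`, one has `g(x_k) − g(x*) ≤ ‖x_0 − x*‖²/(2τk)` for all `k ≥ 1`. -/
theorem proximal_point_rate
    {H : Type*} [NormedAddCommGroup H] [InnerProductSpace ℝ H] [CompleteSpace H]
    (g : H → EReal) (hbot : ∀ x, g x ≠ ⊥) (hproper : ∃ x, g x ≠ ⊤)
    (hclosed : LowerSemicontinuous g) (hconv : ConvexFnE g)
    (xs : H) (hmin : ∀ y : H, g xs ≤ g y)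
    (τ : ℝ) (hτ : 0 < τ)
    (x : ℕ → H) (hrec : ∀ k : ℕ, IsProxPt g τ (x k) (x (k + 1))) :
    ∀ k : ℕ, 1 ≤ k →
      g (x k) ≤ g xs + ((‖x 0 - xs‖ ^ 2 / (2 * τ * k) : ℝ) : EReal) :=
  proximal_point_rate_general g hbot hproper hconv xs hmin τ hτ x hrec
end
end

section
/- Let H be a real Hilbert space, g : H → ℝ ∪ {∞} proper, closed and convex, h : H → ℝ convex and L-smooth for some L > 0, and suppose Φ = g + h has a minimiser x* ∈ H. With step size τ = 1/L, define the proximal gradient iterates x_{k+1} = prox_{τg}(x_k − τ∇h(x_k)) from any x_0 ∈ H. Then for every k ≥ 1, Φ(x_k) − Φ(x*) ≤ L‖x_0 − x*‖² / (2k). -/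
noncomputable section

/-!
Each step combines three inequalities: the descent lemma for `h` (from the Lipschitz gradient),
the first-order convexity inequality for `h`, and the subgradient inequality
`g p + ⟪z - p, y - p⟫ / τ ≤ g y` satisfied by `p = prox_{τ g}(z)`. Together they give, for every
`y`, `Φ(x_{k+1}) + L/2 ‖x_{k+1} - y‖² ≤ Φ(y) + L/2 ‖x_k - y‖²`. Taking `y = xs` and summing
telescopes the distances, and taking `y = x_k` shows that `Φ(x_k)` is nonincreasing, so
`k (Φ(x_k) - Φ(xs)) ≤ L/2 ‖x_0 - xs‖²`.
-/

open Set AffineMap Filter Topology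
open scoped RealInnerProductSpace

theorem succ_mul_add_le_of_antitone {a e : ℕ → ℝ} (hstep : ∀ n, a n + e (n + 1) ≤ e n)
    (ha : Antitone a) (n : ℕ) : (n + 1) * a n + e (n + 1) ≤ e 0 := by
  induction n with
  | zero => simpa using hstep 0
  | succ n ih =>
    have := ha n.le_succ
    push_cast
    nlinarith [hstep (n + 1), n.cast_nonneg (α := ℝ)]

theorem le_add_deriv_mul_add_of_deriv_sub_le {φ φ' : ℝ → ℝ} {K a b : ℝ}
    (hφ : ∀ s, HasDerivAt φ (φ' s) s) (hK : ∀ s t, s ≤ t → φ' t - φ' s ≤ K * (t - s))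
    (hab : a ≤ b) : φ b ≤ φ a + φ' a * (b - a) + K / 2 * (b - a) ^ 2 := by
  rcases hab.eq_or_lt with rfl | hab
  · simp
  set ψ : ℝ → ℝ := fun s => K / 2 * s ^ 2 - φ s
  have hψ : ∀ s, HasDerivAt ψ (K * s - φ' s) s := fun s =>
    (((hasDerivAt_pow 2 s).const_mul (K / 2)).sub (hφ s)).congr_deriv (by ring)
  have hmono : Monotone (deriv ψ) := fun s t hst => by
    simp only [(hψ _).deriv]
    linarith [hK s t hst]
  have := (hmono.convexOn_univ_of_deriv fun s => (hψ s).differentiableAt).le_slope_of_hasDerivAt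
    (mem_univ a) (mem_univ b) hab (hψ a)
  rw [slope_def_field, le_div_iff₀ (sub_pos.2 hab)] at this
  simp only [ψ] at this
  nlinarith

section

variable {H : Type*} [NormedAddCommGroup H]

namespace IsProxPt

variable {g : H → EReal} {τ : ℝ} {z p y : H}

theorem ne_top_s7 (hp : IsProxPt g τ z p) (hy : g y ≠ ⊤) : g p ≠ ⊤ := by
  intro htop
  have := hp.1 y
  rw [htop, EReal.top_add_coe, top_le_iff] at this
  exact (EReal.add_lt_top hy (EReal.coe_ne_top _)).ne this

variable [InnerProductSpace ℝ H]

theorem add_inner_div_le_add_mul (hp : IsProxPt g τ z p) (hτ : 0 < τ) (hgbot : ∀ x, g x ≠ ⊥)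
    (hgconv : ConvexFnE g) {gp gy : ℝ} (hgp : g p = gp) (hgy : g y = gy) {t : ℝ} (ht₀ : 0 < t)
    (ht₁ : t ≤ 1) : gp + ⟪z - p, y - p⟫ / τ ≤ gy + t * ‖y - p‖ ^ 2 / (2 * τ) := by
  set w := lineMap p y t
  have hgw : g w ≤ ((1 - t) * gp + t * gy : ℝ) := by
    have := hgconv p y (1 - t) t (by linarith) ht₀.le (by ring)
    rwa [hgp, hgy, ← lineMap_apply_module] at this
  have hprox := hp.1 w
  lift g w to ℝ using ⟨(hgw.trans_lt (EReal.coe_lt_top _)).ne, hgbot w⟩ with gw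
  rw [hgp, ← EReal.coe_add, ← EReal.coe_add, EReal.coe_le_coe_iff] at hprox
  rw [EReal.coe_le_coe_iff] at hgw
  have hwz : w - z = (p - z) + t • (y - p) := by simp only [w, lineMap_apply_module']; abel
  rw [hwz, norm_add_sq_real, inner_smul_right, norm_smul, Real.norm_of_nonneg ht₀.le] at hprox
  have hB : ⟪z - p, y - p⟫ = -⟪p - z, y - p⟫ := by rw [← inner_neg_left, neg_sub]
  have key : t * (gp + ⟪z - p, y - p⟫ / τ) ≤ t * (gy + t * ‖y - p‖ ^ 2 / (2 * τ)) := by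
    rw [hB]
    field_simp at hprox ⊢
    nlinarith
  exact le_of_mul_le_mul_left key ht₀

theorem add_inner_div_le (hp : IsProxPt g τ z p) (hτ : 0 < τ) (hgbot : ∀ x, g x ≠ ⊥)
    (hgconv : ConvexFnE g) {gp gy : ℝ} (hgp : g p = gp) (hgy : g y = gy) :
    gp + ⟪z - p, y - p⟫ / τ ≤ gy := by
  have hlim : Tendsto (fun t : ℝ => gy + t * ‖y - p‖ ^ 2 / (2 * τ)) (𝓝[>] 0) (𝓝 gy) := by
    refine tendsto_nhdsWithin_of_tendsto_nhds ?_
    exact (by fun_prop : Continuous fun t : ℝ => gy + t * ‖y - p‖ ^ 2 / (2 * τ)).tendsto' 0 gy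
      (by simp)
  refine ge_of_tendsto hlim (mem_of_superset (Ioc_mem_nhdsGT one_pos) fun t ht => ?_)
  exact hp.add_inner_div_le_add_mul hτ hgbot hgconv hgp hgy ht.1 ht.2

end IsProxPt

variable [InnerProductSpace ℝ H] [CompleteSpace H] {h : H → ℝ} {x y : H}

theorem hasDerivAt_comp_lineMap {t : ℝ} (hd : DifferentiableAt ℝ h (lineMap x y t)) :
    HasDerivAt (h ∘ lineMap x y) ⟪gradient h (lineMap x y t), y - x⟫ t :=
  hd.hasGradientAt.hasFDerivAt.comp_hasDerivAt t hasDerivAt_lineMap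

theorem ConvexOn.add_inner_gradient_le (hconv : ConvexOn ℝ univ h)
    (hd : DifferentiableAt ℝ h x) (y : H) : h x + ⟪gradient h x, y - x⟫ ≤ h y := by
  have hline : ConvexOn ℝ univ (h ∘ lineMap x y) := hconv.comp_affineMap _
  have := hline.le_slope_of_hasDerivAt (mem_univ 0) (mem_univ 1) one_pos
    (hasDerivAt_comp_lineMap (by simpa using hd))
  simp only [Function.comp_apply, lineMap_apply_zero, lineMap_apply_one, slope_def_field,
    sub_zero, div_one] at this
  linarith

theorem le_add_inner_gradient_add_of_lipschitz {L : ℝ} (hdiff : Differentiable ℝ h)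
    (hlip : ∀ x y : H, ‖gradient h x - gradient h y‖ ≤ L * ‖x - y‖) (x y : H) :
    h y ≤ h x + ⟪gradient h x, y - x⟫ + L / 2 * ‖y - x‖ ^ 2 := by
  have hK : ∀ s t : ℝ, s ≤ t → ⟪gradient h (lineMap x y t), y - x⟫ -
      ⟪gradient h (lineMap x y s), y - x⟫ ≤ L * ‖y - x‖ ^ 2 * (t - s) := fun s t hst => by
    have hsub : lineMap x y t - lineMap x y s = (t - s) • (y - x) := by
      simp only [lineMap_apply_module']; module
    calc _ = ⟪gradient h (lineMap x y t) - gradient h (lineMap x y s), y - x⟫ :=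
          (inner_sub_left _ _ _).symm
      _ ≤ ‖gradient h (lineMap x y t) - gradient h (lineMap x y s)‖ * ‖y - x‖ :=
          real_inner_le_norm _ _
      _ ≤ L * ‖lineMap x y t - lineMap x y s‖ * ‖y - x‖ :=
          mul_le_mul_of_nonneg_right (hlip _ _) (norm_nonneg _)
      _ = L * ‖y - x‖ ^ 2 * (t - s) := by
          rw [hsub, norm_smul, Real.norm_of_nonneg (sub_nonneg.2 hst)]; ring
  have := le_add_deriv_mul_add_of_deriv_sub_le (fun s => hasDerivAt_comp_lineMap (hdiff _)) hK
    zero_le_one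
  simp only [Function.comp_apply, lineMap_apply_zero, lineMap_apply_one, sub_zero, mul_one,
    one_pow] at this
  linarith

theorem IsProxPt.add_add_norm_sq_le_of_gradient_step {g : H → EReal} {p : H} {L : ℝ} (hL : 0 < L)
    (hconv : ConvexOn ℝ univ h) (hdiff : Differentiable ℝ h)
    (hlip : ∀ x y : H, ‖gradient h x - gradient h y‖ ≤ L * ‖x - y‖)
    (hp : IsProxPt g (1 / L) (x - (1 / L) • gradient h x) p) (hgbot : ∀ x, g x ≠ ⊥)
    (hgconv : ConvexFnE g) {gp gy : ℝ} (hgp : g p = gp) (hgy : g y = gy) :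
    gp + h p + L / 2 * ‖p - y‖ ^ 2 ≤ gy + h y + L / 2 * ‖x - y‖ ^ 2 := by
  have hsub := hp.add_inner_div_le (one_div_pos.2 hL) hgbot hgconv hgp hgy
  have hdesc := le_add_inner_gradient_add_of_lipschitz hdiff hlip x p
  have hcvx := hconv.add_inner_gradient_le (hdiff x) y
  have hxy : ‖x - y‖ ^ 2 = ‖x - p‖ ^ 2 - 2 * ⟪x - p, y - p⟫ + ‖p - y‖ ^ 2 := by
    rw [norm_sub_rev p y, ← norm_sub_sq_real, sub_sub_sub_cancel_right]
  have hinner : ⟪x - (1 / L) • gradient h x - p, y - p⟫ / (1 / L) =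
      L * ⟪x - p, y - p⟫ - ⟪gradient h x, y - x⟫ + ⟪gradient h x, p - x⟫ := by
    have hsplit : ⟪gradient h x, y - p⟫ = ⟪gradient h x, y - x⟫ - ⟪gradient h x, p - x⟫ := by
      rw [← inner_sub_right, sub_sub_sub_cancel_right]
    rw [sub_right_comm, inner_sub_left, real_inner_smul_left, hsplit]
    field_simp
    ring
  rw [norm_sub_rev p x] at hdesc
  rw [hxy]
  linarith

end

theorem proximal_gradient_rate_general
    {H : Type*} [NormedAddCommGroup H] [InnerProductSpace ℝ H] [CompleteSpace H]
    (g : H → EReal) (hgbot : ∀ x, g x ≠ ⊥) (hgconv : ConvexFnE g)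
    (h : H → ℝ) (L : ℝ) (hL : 0 < L)
    (hconv : ConvexOn ℝ Set.univ h) (hdiff : Differentiable ℝ h)
    (hlip : ∀ x y : H, ‖gradient h x - gradient h y‖ ≤ L * ‖x - y‖)
    (xs : H)
    (x : ℕ → H)
    (hrec : ∀ k : ℕ, IsProxPt g (1 / L) (x k - (1 / L) • gradient h (x k)) (x (k + 1))) :
    ∀ k : ℕ, 1 ≤ k →
      g (x k) + (h (x k) : EReal) ≤
        g xs + (h xs : EReal) + ((L * ‖x 0 - xs‖ ^ 2 / (2 * k) : ℝ) : EReal) := by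
  intro k hk
  obtain ⟨n, rfl⟩ := Nat.exists_eq_add_of_le' hk
  rcases eq_or_ne (g xs) ⊤ with hxs | hxs
  · simp [hxs]
  have hfin : ∀ n, g (x (n + 1)) ≠ ⊤ := fun n => (hrec n).ne_top_s7 hxs
  have hreal : ∀ y, g y ≠ ⊤ → g y = (g y).toReal := fun y hy =>
    (EReal.coe_toReal hy (hgbot y)).symm
  have hstep := fun n y (hy : g y ≠ ⊤) => (hrec n).add_add_norm_sq_le_of_gradient_step hL hconv
    hdiff hlip hgbot hgconv (hreal _ (hfin n)) (hreal y hy)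
  set gap : ℕ → ℝ := fun n => (g (x (n + 1))).toReal + h (x (n + 1)) - ((g xs).toReal + h xs)
  have hdecrease : Antitone gap := antitone_nat_of_succ_le fun n => by
    have := hstep (n + 1) (x (n + 1)) (hfin n)
    have : 0 ≤ L / 2 * ‖x (n + 2) - x (n + 1)‖ ^ 2 := by positivity
    simp only [gap, sub_self, norm_zero] at *
    linarith
  have hrate := succ_mul_add_le_of_antitone (e := fun n => L / 2 * ‖x n - xs‖ ^ 2)
    (fun n => by linarith [hstep n xs hxs]) hdecrease n
  rw [hreal _ (hfin n), hreal xs hxs, ← EReal.coe_add, ← EReal.coe_add, ← EReal.coe_add,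
    EReal.coe_le_coe_iff]
  have hgap : gap n ≤ L * ‖x 0 - xs‖ ^ 2 / (2 * (n + 1 : ℕ)) := by
    rw [le_div_iff₀ (by positivity)]
    have : 0 ≤ L / 2 * ‖x (n + 1) - xs‖ ^ 2 := by positivity
    push_cast
    linarith
  linarith

/-- `O(1/k)` convergence of proximal gradient descent with step `τ = 1/L`:
for proper closed convex `g : H → ℝ ∪ {∞}` and convex `L`-smooth `h : H → ℝ` such that
`Φ = g + h` has a minimiser `x*`, the iterates `x_{k+1} = prox_{τg}(x_k − τ∇h(x_k))` satisfy
`Φ(x_k) − Φ(x*) ≤ L‖x_0 − x*‖²/(2k)` for all `k ≥ 1`. -/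
theorem proximal_gradient_rate
    {H : Type*} [NormedAddCommGroup H] [InnerProductSpace ℝ H] [CompleteSpace H]
    (g : H → EReal) (hgbot : ∀ x, g x ≠ ⊥) (hgproper : ∃ x, g x ≠ ⊤)
    (hgclosed : LowerSemicontinuous g) (hgconv : ConvexFnE g)
    (h : H → ℝ) (L : ℝ) (hL : 0 < L)
    (hconv : ConvexOn ℝ Set.univ h) (hdiff : Differentiable ℝ h)
    (hlip : ∀ x y : H, ‖gradient h x - gradient h y‖ ≤ L * ‖x - y‖)
    (xs : H) (hmin : ∀ y : H, g xs + (h xs : EReal) ≤ g y + (h y : EReal))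
    (x : ℕ → H)
    (hrec : ∀ k : ℕ, IsProxPt g (1 / L) (x k - (1 / L) • gradient h (x k)) (x (k + 1))) :
    ∀ k : ℕ, 1 ≤ k →
      g (x k) + (h (x k) : EReal) ≤
        g xs + (h xs : EReal) + ((L * ‖x 0 - xs‖ ^ 2 / (2 * k) : ℝ) : EReal) :=
  proximal_gradient_rate_general g hgbot hgconv h L hL hconv hdiff hlip xs x hrec
end
end

section
/- Let H₁, H₂ be real Hilbert spaces, K : H₁ → H₂ a nonzero bounded linear operator, and v ∈ H₂ such that the solution set S = { u ∈ H₁ : K u = v } is nonempty. Let τ > 0 satisfy τ‖K‖² < 2, and define the Landweber iterates u_0 = 0, u_{k+1} = u_k − τ K*(K u_k − v). Then S has a unique element u† of minimal norm, and u_k converges strongly to u† as k → ∞. -/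
/-!
With `A = K†K`, the error `u_k - u†` evolves under the linear map `T = 1 - τA`, and the energy
estimate `‖Tz‖² + τ(2 - τ‖K‖²)‖Kz‖² ≤ ‖z‖²` makes `T` nonexpansive and `∑ₖ ‖K Tᵏz‖²` finite.
Since `T K† = K† (1 - τKK†)`, the same estimate for `K†` gives `Tᵏ(K†w) → 0`; by
equicontinuity of the iterates this extends to the closure of the range of `K†`, which is
`(ker K)ᗮ`. The initial error `-u†` lies there, because `u†` is the solution orthogonal to
`ker K`, which by Pythagoras is also the unique solution of minimal norm.
-/

noncomputable section
open Filter

section Landweber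

open Topology ContinuousLinearMap
open scoped RealInnerProductSpace

variable {E F : Type*} [NormedAddCommGroup E] [InnerProductSpace ℝ E]
  [NormedAddCommGroup F] [InnerProductSpace ℝ F]

section MinimalNorm

variable (K : E →L[ℝ] F) {x w : E}

theorem norm_sq_add_norm_sub_sq_of_mem_orthogonal_ker (hx : x ∈ K.kerᗮ) (hw : K w = K x) :
    ‖x‖ ^ 2 + ‖w - x‖ ^ 2 = ‖w‖ ^ 2 := by
  have hker : w - x ∈ K.ker := by simp [hw]
  have horth : ⟪x, w - x⟫ = 0 := Submodule.inner_left_of_mem_orthogonal hker hx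
  simpa [sq] using (norm_add_sq_eq_norm_sq_add_norm_sq_real horth).symm

theorem norm_le_of_mem_orthogonal_ker (hx : x ∈ K.kerᗮ) (hw : K w = K x) : ‖x‖ ≤ ‖w‖ := by
  have := norm_sq_add_norm_sub_sq_of_mem_orthogonal_ker K hx hw
  nlinarith [norm_nonneg x, norm_nonneg w, sq_nonneg ‖w - x‖]

theorem eq_of_mem_orthogonal_ker_of_norm_le (hx : x ∈ K.kerᗮ) (hw : K w = K x)
    (hle : ‖w‖ ≤ ‖x‖) : w = x := by
  have := norm_sq_add_norm_sub_sq_of_mem_orthogonal_ker K hx hw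
  have : ‖w - x‖ ^ 2 = 0 := by nlinarith [norm_nonneg x, norm_nonneg w, sq_nonneg ‖w - x‖]
  simpa [sub_eq_zero] using this

theorem exists_mem_orthogonal_ker_apply_eq [CompleteSpace E] (u₀ : E) :
    ∃ x ∈ K.kerᗮ, K x = K u₀ :=
  ⟨u₀ - K.ker.starProjection u₀, K.ker.sub_starProjection_mem_orthogonal u₀, by
    simpa using LinearMap.mem_ker.mp (K.ker.starProjection_apply_mem u₀)⟩

end MinimalNorm

section LandweberStep

variable [CompleteSpace E] [CompleteSpace F]

def landweberStep (K : E →L[ℝ] F) (τ : ℝ) : E →L[ℝ] E := 1 - τ • (adjoint K ∘L K)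

variable (K : E →L[ℝ] F) (τ : ℝ)

theorem landweberStep_apply (z : E) : landweberStep K τ z = z - τ • adjoint K (K z) := rfl

theorem norm_sq_landweberStep_apply_add_le (z : E) :
    ‖landweberStep K τ z‖ ^ 2 + τ * (2 - τ * ‖K‖ ^ 2) * ‖K z‖ ^ 2 ≤ ‖z‖ ^ 2 := by
  have hinner : ⟪z, adjoint K (K z)⟫ = ‖K z‖ ^ 2 := by
    rw [adjoint_inner_right, real_inner_self_eq_norm_sq]
  have hadj : ‖adjoint K (K z)‖ ≤ ‖K‖ * ‖K z‖ := by
    simpa using (adjoint K).le_opNorm (K z)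
  have hadj_sq := pow_le_pow_left₀ (norm_nonneg _) hadj 2
  rw [landweberStep_apply, norm_sub_sq_real, real_inner_smul_right, hinner, norm_smul,
    Real.norm_eq_abs, mul_pow, sq_abs]
  nlinarith [mul_le_mul_of_nonneg_left hadj_sq (sq_nonneg τ)]

theorem norm_sq_iterate_landweberStep_add_sum_le (n : ℕ) (z : E) :
    ‖(landweberStep K τ)^[n] z‖ ^ 2 +
      τ * (2 - τ * ‖K‖ ^ 2) * ∑ j ∈ Finset.range n, ‖K ((landweberStep K τ)^[j] z)‖ ^ 2
      ≤ ‖z‖ ^ 2 := by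
  induction n generalizing z with
  | zero => simp
  | succ n ih =>
    have hstep := norm_sq_landweberStep_apply_add_le K τ z
    have htail := ih (landweberStep K τ z)
    rw [Finset.sum_range_succ', Function.iterate_succ_apply]
    simp only [Function.iterate_succ_apply, Function.iterate_zero_apply] at htail ⊢
    nlinarith

theorem landweberStep_adjoint_apply (w : F) :
    landweberStep K τ (adjoint K w) = adjoint K (landweberStep (adjoint K) τ w) := by
  simp [landweberStep_apply, adjoint_adjoint]

variable {τ}

theorem norm_landweberStep_apply_le (hτ0 : 0 ≤ τ) (hτ : τ * ‖K‖ ^ 2 ≤ 2) (z : E) :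
    ‖landweberStep K τ z‖ ≤ ‖z‖ := by
  have henergy := norm_sq_landweberStep_apply_add_le K τ z
  have hdecr : 0 ≤ τ * (2 - τ * ‖K‖ ^ 2) * ‖K z‖ ^ 2 := by
    have : 0 ≤ 2 - τ * ‖K‖ ^ 2 := by linarith
    positivity
  exact (pow_le_pow_iff_left₀ (norm_nonneg _) (norm_nonneg _) two_ne_zero).mp (by linarith)

theorem lipschitzWith_one_landweberStep (hτ0 : 0 ≤ τ) (hτ : τ * ‖K‖ ^ 2 ≤ 2) :
    LipschitzWith 1 (landweberStep K τ) := by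
  simpa using AddMonoidHomClass.lipschitz_of_bound (landweberStep K τ) 1
    (by simpa using norm_landweberStep_apply_le K hτ0 hτ)

theorem summable_norm_sq_apply_iterate_landweberStep (hτ0 : 0 < τ) (hτ : τ * ‖K‖ ^ 2 < 2)
    (z : E) : Summable fun j ↦ ‖K ((landweberStep K τ)^[j] z)‖ ^ 2 := by
  have hc : 0 < τ * (2 - τ * ‖K‖ ^ 2) := mul_pos hτ0 (by linarith)
  refine summable_of_sum_range_le (c := ‖z‖ ^ 2 / (τ * (2 - τ * ‖K‖ ^ 2)))
    (fun _ ↦ by positivity) fun n ↦ ?_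
  rw [le_div_iff₀' hc]
  nlinarith [norm_sq_iterate_landweberStep_add_sum_le K τ n z,
    sq_nonneg ‖(landweberStep K τ)^[n] z‖]

theorem tendsto_iterate_landweberStep_adjoint_apply (hτ0 : 0 < τ) (hτ : τ * ‖K‖ ^ 2 < 2)
    (w : F) : Tendsto (fun k ↦ (landweberStep K τ)^[k] (adjoint K w)) atTop (𝓝 0) := by
  have hsemiconj : Function.Semiconj (adjoint K) (landweberStep (adjoint K) τ)
      (landweberStep K τ) := fun w ↦ (landweberStep_adjoint_apply K τ w).symm
  have hsq := (summable_norm_sq_apply_iterate_landweberStep (adjoint K) hτ0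
    (by simpa using hτ) w).tendsto_atTop_zero
  have hiter : ∀ k, (landweberStep K τ)^[k] (adjoint K w) =
      adjoint K ((landweberStep (adjoint K) τ)^[k] w) :=
    fun k ↦ ((hsemiconj.iterate_right k).eq w).symm
  simp only [hiter]
  rw [tendsto_zero_iff_norm_tendsto_zero]
  simpa using hsq.sqrt

theorem tendsto_iterate_landweberStep_of_mem_orthogonal_ker (hτ0 : 0 < τ)
    (hτ : τ * ‖K‖ ^ 2 < 2) {x : E} (hx : x ∈ K.kerᗮ) :
    Tendsto (fun k ↦ (landweberStep K τ)^[k] x) atTop (𝓝 0) := by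
  have hclosed : IsClosed {x | Tendsto (fun k ↦ (landweberStep K τ)^[k] x) atTop (𝓝 0)} :=
    (LipschitzWith.uniformEquicontinuous _ 1 fun k ↦
      by simpa using (lipschitzWith_one_landweberStep K hτ0.le hτ.le).iterate k).equicontinuous
      |>.isClosed_setOfPred_tendsto continuous_const
  rw [orthogonal_ker, ← SetLike.mem_coe, Submodule.topologicalClosure_coe] at hx
  exact closure_minimal (Set.forall_mem_range.2
    (tendsto_iterate_landweberStep_adjoint_apply K hτ0 hτ)) hclosed hx

theorem sub_eq_iterate_landweberStep {u : ℕ → E} {v : F}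
    (hrec : ∀ k, u (k + 1) = u k - τ • adjoint K (K (u k) - v)) {x : E} (hx : K x = v)
    (k : ℕ) : u k - x = (landweberStep K τ)^[k] (u 0 - x) := by
  induction k with
  | zero => rfl
  | succ k ih =>
    rw [Function.iterate_succ_apply', ← ih, landweberStep_apply, hrec, ← hx]
    simp only [map_sub, smul_sub]
    abel

end LandweberStep

end Landweber

theorem landweber_converges_to_minimal_norm_solution_general
    {H₁ H₂ : Type*} [NormedAddCommGroup H₁] [InnerProductSpace ℝ H₁] [CompleteSpace H₁]
    [NormedAddCommGroup H₂] [InnerProductSpace ℝ H₂] [CompleteSpace H₂]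
    (K : H₁ →L[ℝ] H₂) (v : H₂) (hS : ∃ u : H₁, K u = v)
    (τ : ℝ) (hτ0 : 0 < τ) (hτ : τ * ‖K‖ ^ 2 < 2)
    (u : ℕ → H₁) (hu0 : u 0 = 0)
    (hrec : ∀ k : ℕ, u (k + 1) = u k - τ • ContinuousLinearMap.adjoint K (K (u k) - v)) :
    ∃ udag : H₁,
      (K udag = v ∧ ∀ w : H₁, K w = v → ‖udag‖ ≤ ‖w‖) ∧
      (∀ w : H₁, (K w = v ∧ ∀ w' : H₁, K w' = v → ‖w‖ ≤ ‖w'‖) → w = udag) ∧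
      Tendsto u atTop (nhds udag) := by
  obtain ⟨u₀, rfl⟩ := hS
  obtain ⟨udag, hudag, hKudag⟩ := exists_mem_orthogonal_ker_apply_eq K u₀
  refine ⟨udag, ⟨hKudag, fun w hw ↦ ?_⟩, fun w ⟨hw, hmin⟩ ↦ ?_, ?_⟩
  · exact norm_le_of_mem_orthogonal_ker K hudag (hw.trans hKudag.symm)
  · exact eq_of_mem_orthogonal_ker_of_norm_le K hudag (hw.trans hKudag.symm) (hmin udag hKudag)
  · rw [← tendsto_sub_nhds_zero_iff]
    simpa [sub_eq_iterate_landweberStep K hrec hKudag, hu0] using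
      tendsto_iterate_landweberStep_of_mem_orthogonal_ker K hτ0 hτ (neg_mem hudag)

/-- Convergence of the Landweber iteration to the minimal-norm solution: if
`K : H₁ → H₂` is a nonzero bounded linear operator, `v` is attainable (`S = {u : Ku = v}` is
nonempty) and `τ‖K‖² < 2`, then the solution set has a unique element `u†` of minimal norm and
the Landweber iterates `u_0 = 0`, `u_{k+1} = u_k − τK*(Ku_k − v)` converge strongly to `u†`. -/
theorem landweber_converges_to_minimal_norm_solution
    {H₁ H₂ : Type*} [NormedAddCommGroup H₁] [InnerProductSpace ℝ H₁] [CompleteSpace H₁]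
    [NormedAddCommGroup H₂] [InnerProductSpace ℝ H₂] [CompleteSpace H₂]
    (K : H₁ →L[ℝ] H₂) (hK : K ≠ 0) (v : H₂) (hS : ∃ u : H₁, K u = v)
    (τ : ℝ) (hτ0 : 0 < τ) (hτ : τ * ‖K‖ ^ 2 < 2)
    (u : ℕ → H₁) (hu0 : u 0 = 0)
    (hrec : ∀ k : ℕ, u (k + 1) = u k - τ • ContinuousLinearMap.adjoint K (K (u k) - v)) :
    ∃ udag : H₁,
      (K udag = v ∧ ∀ w : H₁, K w = v → ‖udag‖ ≤ ‖w‖) ∧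
      (∀ w : H₁, (K w = v ∧ ∀ w' : H₁, K w' = v → ‖w‖ ≤ ‖w'‖) → w = udag) ∧
      Tendsto u atTop (nhds udag) :=
  landweber_converges_to_minimal_norm_solution_general K v hS τ hτ0 hτ u hu0 hrec
end
end

section
/- (Linear convergence of SGD in the interpolation / noise-free regime) Let H be a real Hilbert space and h_1, …, h_n : H → ℝ convex, each L_max-smooth, and set h = ∑_{i=1}^n h_i. Assume h is μ-strongly convex with minimiser x*, and that the interpolation condition holds: ∇h_i(x*) = 0 for every i = 1, …, n. Let (Ω, 𝓕, P) be a probability space and (i_k)_{k≥0} independent random indices, each uniformly distributed on {1, …, n}. Fix a constant step size 0 < τ ≤ 1/(2 n L_max) and define SGD iterates x_0 ∈ H (deterministic), x_{k+1} = x_k − τ · n ∇h_{i_k}(x_k). Then for every k ≥ 0, E[‖x_k − x*‖²] ≤ (1 − τμ)^k ‖x_0 − x*‖²; in particular SGD with constant step size converges linearly. -/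
/-!
Under interpolation each `h_i` is minimised at `x*`, so convexity and `L`-smoothness make it
co-coercive there: `‖∇h_i y‖² ≤ 2L ⟪∇h_i y, y - x*⟫`. Hence a gradient step of length `s` with
`2sL ≤ 1` satisfies `‖y - s∇h_i y - x*‖² ≤ ‖y - x*‖² - s ⟪∇h_i y, y - x*⟫`. Averaging over `i`
with `s = τn` and using the strong monotonicity `μ‖y - x*‖² ≤ ⟪∇h y, y - x*⟫` of `∇h = ∑ ∇h_i`
shows that the SGD map contracts `‖· - x*‖²` by `1 - τμ` in mean over the uniform index.
Since `x_k` is a function of `i_0, …, i_{k-1}`, which are independent of `i_k`, the mean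
contraction passes to expectations: `E‖x_{k+1} - x*‖² ≤ (1 - τμ) E‖x_k - x*‖²`.
-/

open Set MeasureTheory ProbabilityTheory
open scoped RealInnerProductSpace ENNReal

section Smooth

variable {H : Type*} [NormedAddCommGroup H] [InnerProductSpace ℝ H] [CompleteSpace H]

theorem HasGradientAt.hasDerivAt_comp_add_smul {f : H → ℝ} {g x v : H} {t : ℝ}
    (h : HasGradientAt f g (x + t • v)) :
    HasDerivAt (fun s : ℝ => f (x + s • v)) ⟪g, v⟫ t := by
  have hline : HasDerivAt (fun s : ℝ => x + s • v) v t := by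
    simpa using ((hasDerivAt_id t).smul_const v).const_add x
  simpa [Function.comp_def] using (hasGradientAt_iff_hasFDerivAt.mp h).comp_hasDerivAt t hline

theorem ConvexOn.add_inner_le_of_hasGradientAt {f : H → ℝ} {g x : H}
    (hf : ConvexOn ℝ univ f) (h : HasGradientAt f g x) (y : H) :
    f x + ⟪g, y - x⟫ ≤ f y := by
  have hline : ConvexOn ℝ univ fun t : ℝ => f (x + t • (y - x)) := by
    simpa [Function.comp_def, AffineMap.lineMap_apply, add_comm] using
      hf.comp_affineMap (AffineMap.lineMap x y)
  have hderiv : HasDerivAt (fun t : ℝ => f (x + t • (y - x))) ⟪g, y - x⟫ 0 :=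
    HasGradientAt.hasDerivAt_comp_add_smul (by simpa using h)
  have := hline.le_slope_of_hasDerivAt (mem_univ 0) (mem_univ 1) one_pos hderiv
  simp only [slope_def_field, one_smul, add_sub_cancel, zero_smul, add_zero, sub_zero,
    div_one] at this
  linarith

theorem ConvexOn.inner_sub_nonneg_of_hasGradientAt {f : H → ℝ} {f' : H → H}
    (hf : ConvexOn ℝ univ f) (h : ∀ z, HasGradientAt f (f' z) z) (x y : H) :
    0 ≤ ⟪f' y - f' x, y - x⟫ := by
  have hx := hf.add_inner_le_of_hasGradientAt (h x) y
  have hy := hf.add_inner_le_of_hasGradientAt (h y) x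
  rw [← neg_sub y x, inner_neg_right] at hy
  rw [inner_sub_left]
  linarith

theorem le_add_inner_gradient_add_mul_sq {f : H → ℝ} {L : ℝ} (hf : Differentiable ℝ f)
    (hlip : ∀ a b, ‖gradient f a - gradient f b‖ ≤ L * ‖a - b‖) (x y : H) :
    f y ≤ f x + ⟪gradient f x, y - x⟫ + L / 2 * ‖y - x‖ ^ 2 := by
  set v := y - x
  set g : ℝ → ℝ := fun t => f (x + t • v) - t * ⟪gradient f x, v⟫ - L / 2 * t ^ 2 * ‖v‖ ^ 2
  have hderiv : ∀ t, HasDerivAt g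
      (⟪gradient f (x + t • v), v⟫ - ⟪gradient f x, v⟫ - L * t * ‖v‖ ^ 2) t := by
    intro t
    exact (((hf (x + t • v)).hasGradientAt.hasDerivAt_comp_add_smul.sub
      ((hasDerivAt_id t).mul_const ⟪gradient f x, v⟫)).sub
      (((hasDerivAt_pow 2 t).const_mul (L / 2)).mul_const (‖v‖ ^ 2))).congr_deriv
      (by simp only [one_mul, Nat.cast_ofNat]; ring)
  have hslope : ∀ t ∈ Ioo (0 : ℝ) 1,
      ⟪gradient f (x + t • v), v⟫ - ⟪gradient f x, v⟫ - L * t * ‖v‖ ^ 2 ≤ 0 := by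
    rintro t ⟨ht, -⟩
    have := calc ⟪gradient f (x + t • v), v⟫ - ⟪gradient f x, v⟫
        = ⟪gradient f (x + t • v) - gradient f x, v⟫ := (inner_sub_left ..).symm
      _ ≤ ‖gradient f (x + t • v) - gradient f x‖ * ‖v‖ := real_inner_le_norm _ _
      _ ≤ L * ‖t • v‖ * ‖v‖ := by
          gcongr; simpa using hlip (x + t • v) x
      _ = L * t * ‖v‖ ^ 2 := by rw [norm_smul, Real.norm_of_nonneg ht.le]; ring
    linarith
  obtain ⟨c, hc, hgc⟩ := exists_hasDerivAt_eq_slope g _ one_pos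
    (fun t _ => (hderiv t).continuousAt.continuousWithinAt) (fun t _ => hderiv t)
  have h := hslope c hc
  rw [hgc, sub_zero, div_one, sub_nonpos] at h
  simp only [g, v, one_smul, zero_smul, add_zero, add_sub_cancel] at h
  linarith

theorem sq_norm_gradient_le_of_gradient_eq_zero {f : H → ℝ} {L : ℝ} {xs : H} (hL : 0 < L)
    (hconv : ConvexOn ℝ univ f) (hf : Differentiable ℝ f)
    (hlip : ∀ a b, ‖gradient f a - gradient f b‖ ≤ L * ‖a - b‖) (hxs : gradient f xs = 0)
    (y : H) :
    ‖gradient f y‖ ^ 2 ≤ 2 * L * ⟪gradient f y, y - xs⟫ := by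
  set g := gradient f y
  have hmin : f xs ≤ f (y - L⁻¹ • g) := by
    simpa [hxs] using hconv.add_inner_le_of_hasGradientAt (hf xs).hasGradientAt (y - L⁻¹ • g)
  have hdescent : f (y - L⁻¹ • g) ≤ f y - ‖g‖ ^ 2 / (2 * L) := by
    have := le_add_inner_gradient_add_mul_sq hf hlip y (y - L⁻¹ • g)
    rw [sub_sub_cancel_left, inner_neg_right, norm_neg, real_inner_smul_right,
      real_inner_self_eq_norm_sq, norm_smul, Real.norm_of_nonneg (inv_nonneg.2 hL.le)] at this
    convert this using 1
    field_simp
    ring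
  have hfirst : f y + ⟪g, xs - y⟫ ≤ f xs :=
    hconv.add_inner_le_of_hasGradientAt (hf y).hasGradientAt xs
  rw [← neg_sub y xs, inner_neg_right] at hfirst
  have : ‖g‖ ^ 2 / (2 * L) ≤ ⟪g, y - xs⟫ := by linarith
  rwa [div_le_iff₀ (by positivity), mul_comm] at this

theorem norm_sub_smul_gradient_sub_sq_le {f : H → ℝ} {L s : ℝ} {xs : H} (hL : 0 < L)
    (hconv : ConvexOn ℝ univ f) (hf : Differentiable ℝ f)
    (hlip : ∀ a b, ‖gradient f a - gradient f b‖ ≤ L * ‖a - b‖) (hxs : gradient f xs = 0)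
    (hs : 0 ≤ s) (hsL : 2 * s * L ≤ 1) (y : H) :
    ‖y - s • gradient f y - xs‖ ^ 2 ≤ ‖y - xs‖ ^ 2 - s * ⟪gradient f y, y - xs⟫ := by
  have hcoco := sq_norm_gradient_le_of_gradient_eq_zero hL hconv hf hlip hxs y
  have hinner : 0 ≤ ⟪gradient f y, y - xs⟫ := by
    nlinarith [sq_nonneg ‖gradient f y‖]
  rw [sub_right_comm, norm_sub_sq_real, real_inner_smul_right, norm_smul, Real.norm_of_nonneg hs,
    real_inner_comm]
  nlinarith [mul_le_mul_of_nonneg_left hcoco (sq_nonneg s), mul_nonneg hs hinner]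

theorem HasGradientAt.fun_sum {ι : Type*} {s : Finset ι} {f : ι → H → ℝ} {f' : ι → H} {x : H}
    (h : ∀ i ∈ s, HasGradientAt (f i) (f' i) x) :
    HasGradientAt (fun y => ∑ i ∈ s, f i y) (∑ i ∈ s, f' i) x := by
  rw [hasGradientAt_iff_hasFDerivAt, map_sum]
  exact HasFDerivAt.fun_sum fun i hi => hasGradientAt_iff_hasFDerivAt.mp (h i hi)

theorem mul_sq_norm_sub_le_inner_of_convexOn_sub_sq {F : H → ℝ} {F' : H → H} {μ : ℝ}
    (hconv : ConvexOn ℝ univ fun x => F x - μ / 2 * ‖x‖ ^ 2)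
    (hF : ∀ z, HasGradientAt F (F' z) z) (x y : H) :
    μ * ‖y - x‖ ^ 2 ≤ ⟪F' y - F' x, y - x⟫ := by
  have hG : ∀ z, HasGradientAt (fun x => F x - μ / 2 * ‖x‖ ^ 2) (F' z - μ • z) z := by
    intro z
    rw [hasGradientAt_iff_hasFDerivAt]
    refine ((hasGradientAt_iff_hasFDerivAt.mp (hF z)).sub
      ((hasStrictFDerivAt_norm_sq z).hasFDerivAt.const_mul (μ / 2))).congr_fderiv ?_
    ext w
    simp only [sub_apply, InnerProductSpace.toDual_apply_apply,
      smul_apply, coe_innerSL_apply, inner_sub_left, real_inner_smul_left,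
      nsmul_eq_mul, Nat.cast_ofNat, smul_eq_mul]
    ring
  have := hconv.inner_sub_nonneg_of_hasGradientAt hG x y
  rw [show F' y - μ • y - (F' x - μ • x) = F' y - F' x - μ • (y - x) by module, inner_sub_left,
    real_inner_smul_left, real_inner_self_eq_norm_sq] at this
  linarith

theorem sum_sq_norm_sub_smul_gradient_sub_le {ι : Type*} [Fintype ι] {f : ι → H → ℝ}
    {L μ s : ℝ} {xs : H} (hL : 0 < L) (hconv : ∀ i, ConvexOn ℝ univ (f i))
    (hf : ∀ i, Differentiable ℝ (f i))
    (hlip : ∀ i a b, ‖gradient (f i) a - gradient (f i) b‖ ≤ L * ‖a - b‖)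
    (hstrconv : ConvexOn ℝ univ fun x => (∑ i, f i x) - μ / 2 * ‖x‖ ^ 2)
    (hxs : ∀ i, gradient (f i) xs = 0) (hs : 0 ≤ s) (hsL : 2 * s * L ≤ 1) (y : H) :
    ∑ i, ‖y - s • gradient (f i) y - xs‖ ^ 2 ≤ (Fintype.card ι - s * μ) * ‖y - xs‖ ^ 2 := by
  have hstrong := mul_sq_norm_sub_le_inner_of_convexOn_sub_sq hstrconv
    (fun z => HasGradientAt.fun_sum fun i _ => (hf i z).hasGradientAt) xs y
  simp only [hxs, Finset.sum_const_zero, sub_zero, sum_inner] at hstrong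
  calc ∑ i, ‖y - s • gradient (f i) y - xs‖ ^ 2
      ≤ ∑ i, (‖y - xs‖ ^ 2 - s * ⟪gradient (f i) y, y - xs⟫) := Finset.sum_le_sum fun i _ =>
        norm_sub_smul_gradient_sub_sq_le hL (hconv i) (hf i) (hlip i) (hxs i) hs hsL y
    _ = Fintype.card ι * ‖y - xs‖ ^ 2 - s * ∑ i, ⟪gradient (f i) y, y - xs⟫ := by
        rw [Finset.sum_sub_distrib, ← Finset.mul_sum]; simp
    _ ≤ (Fintype.card ι - s * μ) * ‖y - xs‖ ^ 2 := by
        nlinarith [mul_le_mul_of_nonneg_left hstrong hs]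

theorem sum_inv_mul_ofReal_sq_norm_sgd_step_le {n : ℕ} {f : Fin n → H → ℝ} {L μ τ : ℝ} {xs : H}
    (hL : 0 < L) (hconv : ∀ i, ConvexOn ℝ univ (f i)) (hf : ∀ i, Differentiable ℝ (f i))
    (hlip : ∀ i a b, ‖gradient (f i) a - gradient (f i) b‖ ≤ L * ‖a - b‖)
    (hstrconv : ConvexOn ℝ univ fun x => (∑ i, f i x) - μ / 2 * ‖x‖ ^ 2)
    (hxs : ∀ i, gradient (f i) xs = 0) (hτ : 0 ≤ τ) (hτL : 2 * (τ * n) * L ≤ 1) (y : H) :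
    ∑ j, (n : ℝ≥0∞)⁻¹ * ENNReal.ofReal (‖y - τ • ((n : ℝ) • gradient (f j) y) - xs‖ ^ 2) ≤
      ENNReal.ofReal (1 - τ * μ) * ENNReal.ofReal (‖y - xs‖ ^ 2) := by
  have hreal := sum_sq_norm_sub_smul_gradient_sub_le hL hconv hf hlip hstrconv hxs
    (mul_nonneg hτ n.cast_nonneg) hτL y
  rw [Fintype.card_fin] at hreal
  simp only [smul_smul]
  rw [← Finset.mul_sum, ← ENNReal.ofReal_sum_of_nonneg fun j _ => sq_nonneg _,
    ← ENNReal.ofReal_mul' (sq_nonneg _)]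
  calc (n : ℝ≥0∞)⁻¹ * ENNReal.ofReal (∑ j, ‖y - (τ * n) • gradient (f j) y - xs‖ ^ 2)
      ≤ (n : ℝ≥0∞)⁻¹ * ENNReal.ofReal (n * ((1 - τ * μ) * ‖y - xs‖ ^ 2)) := by
        gcongr
        exact hreal.trans_eq (by ring)
    _ = (n : ℝ≥0∞)⁻¹ * n * ENNReal.ofReal ((1 - τ * μ) * ‖y - xs‖ ^ 2) := by
        rw [ENNReal.ofReal_mul n.cast_nonneg, ENNReal.ofReal_natCast, mul_assoc]
    _ ≤ ENNReal.ofReal ((1 - τ * μ) * ‖y - xs‖ ^ 2) :=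
        mul_le_of_le_one_left zero_le (ENNReal.inv_mul_le_one _)

end Smooth

theorem ProbabilityTheory.IndepFun.lintegral_comp_eq_sum {Ω ι β : Type*} [MeasurableSpace Ω]
    {P : Measure Ω} [Fintype ι] [MeasurableSpace ι] [MeasurableSingletonClass ι]
    [MeasurableSpace β] {I : Ω → ι} {X : Ω → β} (hind : IndepFun I X P) (hI : Measurable I)
    (hX : Measurable X) {F : ι → β → ℝ≥0∞} (hF : ∀ j, Measurable (F j)) :
    ∫⁻ ω, F (I ω) (X ω) ∂P = ∑ j, P (I ⁻¹' {j}) * ∫⁻ ω, F j (X ω) ∂P := by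
  have hsplit : ∀ ω, F (I ω) (X ω) = ∑ j, ({j} : Set ι).indicator 1 (I ω) * F j (X ω) := by
    intro ω
    classical
    rw [Finset.sum_eq_single (I ω) (fun j _ hj => by simp [Ne.symm hj]) (by simp)]
    simp
  have hind_meas : ∀ j, Measurable fun ω => ({j} : Set ι).indicator (1 : ι → ℝ≥0∞) (I ω) :=
    fun j => (measurable_one.indicator (measurableSet_singleton j)).comp hI
  rw [lintegral_congr hsplit, lintegral_finsetSum (f := fun j ω => _ * F j (X ω)) _
    fun j _ => (hind_meas j).mul ((hF j).comp hX)]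
  refine Finset.sum_congr rfl fun j _ => ?_
  refine (lintegral_mul_eq_lintegral_mul_lintegral_of_indepFun (hind_meas j) ((hF j).comp hX)
    (hind.comp (measurable_one.indicator (measurableSet_singleton j)) (hF j))).trans ?_
  rw [← lintegral_indicator_one (hI (measurableSet_singleton j))]
  rfl

theorem exists_eq_comp_history {Ω ι α : Type*} {idx : ℕ → Ω → ι} {T : ι → α → α}
    {x : ℕ → Ω → α} {x0 : α} (hx0 : ∀ ω, x 0 ω = x0)
    (hrec : ∀ k ω, x (k + 1) ω = T (idx k ω) (x k ω)) (k : ℕ) :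
    ∃ Φ : (Fin k → ι) → α, ∀ ω, x k ω = Φ fun i => idx i ω := by
  induction k with
  | zero => exact ⟨fun _ => x0, hx0⟩
  | succ k ih =>
    obtain ⟨Φ, hΦ⟩ := ih
    exact ⟨fun v => T (v (Fin.last k)) (Φ fun i => v i.castSucc), fun ω => by rw [hrec, hΦ]; rfl⟩

theorem ProbabilityTheory.iIndepFun.indepFun_history {Ω ι : Type*} [MeasurableSpace Ω]
    {P : Measure Ω} [MeasurableSpace ι] {idx : ℕ → Ω → ι} (hind : iIndepFun idx P)
    (hmeas : ∀ k, Measurable (idx k)) (k : ℕ) :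
    IndepFun (idx k) (fun ω (i : Fin k) => idx i ω) P := by
  have := hind.indepFun_finset {k} (Finset.range k) (by simp) hmeas
  exact this.comp (measurable_pi_apply ⟨k, Finset.mem_singleton_self k⟩)
    (measurable_pi_lambda _ fun i : Fin k => measurable_pi_apply ⟨i, Finset.mem_range.2 i.2⟩)

theorem lintegral_comp_random_iterate_le {Ω ι α : Type*} [MeasurableSpace Ω] {P : Measure Ω}
    [IsProbabilityMeasure P] [Fintype ι] [MeasurableSpace ι] [MeasurableSingletonClass ι]
    {idx : ℕ → Ω → ι} (hmeas : ∀ k, Measurable (idx k)) (hind : iIndepFun idx P)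
    {p : ι → ℝ≥0∞} (hlaw : ∀ k j, P {ω | idx k ω = j} = p j)
    {T : ι → α → α} {V : α → ℝ≥0∞} {ρ : ℝ≥0∞} (hV : ∀ y, ∑ j, p j * V (T j y) ≤ ρ * V y)
    {x : ℕ → Ω → α} {x0 : α} (hx0 : ∀ ω, x 0 ω = x0)
    (hrec : ∀ k ω, x (k + 1) ω = T (idx k ω) (x k ω)) (k : ℕ) :
    ∫⁻ ω, V (x k ω) ∂P ≤ ρ ^ k * V x0 := by
  induction k with
  | zero => simp [hx0]
  | succ k ih =>
    -- `x k` factors through the countable history `(idx 0, …, idx (k-1))`, which makes every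
    -- function of it measurable and independent of `idx k`; `α` needs no σ-algebra.
    obtain ⟨Φ, hΦ⟩ := exists_eq_comp_history hx0 hrec k
    have hY : Measurable fun ω (i : Fin k) => idx i ω := measurable_pi_lambda _ fun i => hmeas i
    have hmeasY : ∀ g : (Fin k → ι) → ℝ≥0∞, Measurable fun ω => g fun i => idx i ω :=
      fun g => (measurable_of_countable g).comp hY
    calc ∫⁻ ω, V (x (k + 1) ω) ∂P
        = ∑ j, p j * ∫⁻ ω, V (T j (x k ω)) ∂P := by
          simp only [hrec, hΦ]
          rw [(hind.indepFun_history hmeas k).lintegral_comp_eq_sum (hmeas k) hY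
            fun j => measurable_of_countable fun v => V (T j (Φ v))]
          simp only [← hlaw k, Set.preimage, Set.mem_singleton_iff]
      _ = ∫⁻ ω, ∑ j, p j * V (T j (x k ω)) ∂P := by
          simp only [hΦ]
          rw [lintegral_finsetSum _ fun j _ => (hmeasY fun v => V (T j (Φ v))).const_mul _]
          exact Finset.sum_congr rfl fun j _ =>
            (lintegral_const_mul _ (hmeasY fun v => V (T j (Φ v)))).symm
      _ ≤ ∫⁻ ω, ρ * V (x k ω) ∂P := lintegral_mono fun ω => hV _
      _ = ρ * ∫⁻ ω, V (x k ω) ∂P := by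
          simp only [hΦ]; exact lintegral_const_mul _ (hmeasY fun v => V (Φ v))
      _ ≤ ρ ^ (k + 1) * V x0 := by
          rw [pow_succ', mul_assoc]; gcongr

theorem ENNReal.ofReal_pow_mul_le (c r : ℝ) (k : ℕ) :
    ENNReal.ofReal c ^ k * ENNReal.ofReal r ≤ ENNReal.ofReal (c ^ k * r) := by
  rcases le_or_gt 0 c with hc | hc
  · rw [ENNReal.ofReal_mul (pow_nonneg hc k), ENNReal.ofReal_pow hc]
  · cases k with
    | zero => simp
    | succ k => simp [ENNReal.ofReal_eq_zero.2 hc.le]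

theorem sgd_linear_convergence_interpolation_general
    {H : Type*} [NormedAddCommGroup H] [InnerProductSpace ℝ H] [CompleteSpace H]
    {Ω : Type*} [MeasurableSpace Ω] (P : Measure Ω) [IsProbabilityMeasure P]
    (n : ℕ) (f : Fin n → H → ℝ) (Lmax : ℝ)
    (hconv : ∀ i, ConvexOn ℝ Set.univ (f i))
    (hdiff : ∀ i, Differentiable ℝ (f i))
    (hlip : ∀ i, ∀ x y : H, ‖gradient (f i) x - gradient (f i) y‖ ≤ Lmax * ‖x - y‖)
    (μ : ℝ)
    (hstrconv : ConvexOn ℝ Set.univ (fun x : H => (∑ i, f i x) - μ / 2 * ‖x‖ ^ 2))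
    (xs : H)
    (hinterp : ∀ i, gradient (f i) xs = 0)
    (idx : ℕ → Ω → Fin n) (hmeas : ∀ k, Measurable (idx k))
    (hunif : ∀ k (j : Fin n), P {ω | idx k ω = j} = (n : ENNReal)⁻¹)
    (hindep : iIndepFun idx P)
    (τ : ℝ) (hτ0 : 0 < τ) (hτ : τ ≤ 1 / (2 * n * Lmax))
    (x0 : H) (x : ℕ → Ω → H) (hx0 : ∀ ω, x 0 ω = x0)
    (hrec : ∀ k ω, x (k + 1) ω = x k ω - τ • ((n : ℝ) • gradient (f (idx k ω)) (x k ω))) :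
    ∀ k : ℕ,
      ∫⁻ ω, ENNReal.ofReal (‖x k ω - xs‖ ^ 2) ∂P ≤
        ENNReal.ofReal ((1 - τ * μ) ^ k * ‖x0 - xs‖ ^ 2) := by
  have hnL : 0 < 2 * n * Lmax := one_div_pos.mp (hτ0.trans_le hτ)
  have hL : 0 < Lmax := pos_of_mul_pos_right hnL (by positivity)
  have hτL : 2 * (τ * n) * Lmax ≤ 1 := by
    have := (le_div_iff₀ hnL).mp hτ
    linarith
  have hmean := sum_inv_mul_ofReal_sq_norm_sgd_step_le hL hconv hdiff hlip hstrconv hinterp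
    hτ0.le hτL
  intro k
  calc ∫⁻ ω, ENNReal.ofReal (‖x k ω - xs‖ ^ 2) ∂P
      ≤ ENNReal.ofReal (1 - τ * μ) ^ k * ENNReal.ofReal (‖x0 - xs‖ ^ 2) :=
        lintegral_comp_random_iterate_le (V := fun y => ENNReal.ofReal (‖y - xs‖ ^ 2)) hmeas hindep
          hunif hmean hx0 hrec k
    _ ≤ ENNReal.ofReal ((1 - τ * μ) ^ k * ‖x0 - xs‖ ^ 2) := ENNReal.ofReal_pow_mul_le _ _ k

/-- Linear convergence of SGD in the interpolation (noise-free) regime: for a finite sum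
`h = ∑ i, h_i` of convex `L_max`-smooth functions that is `μ`-strongly convex with minimiser
`x*` satisfying `∇h_i(x*) = 0` for all `i`, i.i.d. uniform indices `i_k`, constant step
`0 < τ ≤ 1/(2nL_max)`, and iterates `x_{k+1} = x_k − τ·n∇h_{i_k}(x_k)`, one has
`E[‖x_k − x*‖²] ≤ (1 − τμ)^k ‖x_0 − x*‖²` for every `k`. -/
theorem sgd_linear_convergence_interpolation
    {H : Type*} [NormedAddCommGroup H] [InnerProductSpace ℝ H] [CompleteSpace H]
    {Ω : Type*} [MeasurableSpace Ω] (P : Measure Ω) [IsProbabilityMeasure P]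
    (n : ℕ) (hn : 0 < n) (f : Fin n → H → ℝ) (Lmax : ℝ) (hLmax : 0 < Lmax)
    (hconv : ∀ i, ConvexOn ℝ Set.univ (f i))
    (hdiff : ∀ i, Differentiable ℝ (f i))
    (hlip : ∀ i, ∀ x y : H, ‖gradient (f i) x - gradient (f i) y‖ ≤ Lmax * ‖x - y‖)
    (μ : ℝ) (hμ : 0 < μ)
    (hstrconv : ConvexOn ℝ Set.univ (fun x : H => (∑ i, f i x) - μ / 2 * ‖x‖ ^ 2))
    (xs : H) (hmin : ∀ y : H, ∑ i, f i xs ≤ ∑ i, f i y)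
    (hinterp : ∀ i, gradient (f i) xs = 0)
    (idx : ℕ → Ω → Fin n) (hmeas : ∀ k, Measurable (idx k))
    (hunif : ∀ k (j : Fin n), P {ω | idx k ω = j} = (n : ENNReal)⁻¹)
    (hindep : iIndepFun idx P)
    (τ : ℝ) (hτ0 : 0 < τ) (hτ : τ ≤ 1 / (2 * n * Lmax))
    (x0 : H) (x : ℕ → Ω → H) (hx0 : ∀ ω, x 0 ω = x0)
    (hrec : ∀ k ω, x (k + 1) ω = x k ω - τ • ((n : ℝ) • gradient (f (idx k ω)) (x k ω))) :
    ∀ k : ℕ,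
      ∫⁻ ω, ENNReal.ofReal (‖x k ω - xs‖ ^ 2) ∂P ≤
        ENNReal.ofReal ((1 - τ * μ) ^ k * ‖x0 - xs‖ ^ 2) :=
  sgd_linear_convergence_interpolation_general P n f Lmax hconv hdiff hlip μ hstrconv xs hinterp idx
    hmeas hunif hindep τ hτ0 hτ x0 x hx0 hrec
end
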